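/- arXiv:2409.17006 — 3 statements merged into one kernel-verified Lean document; each statement's English description precedes it below -/
import Mathlib

section
/- For every integer k ≥ 2 there exist a unimodular lattice Λ = Aℤ^k in ℝ^k and a constant c ∈ (0,1] such that every nonzero point (λ₁,…,λ_k) of the dual lattice Λ* = (A^{−1})ᵀℤ^k satisfies |λ₁·λ₂⋯λ_k| ≥ c. In particular, writing λ = (λ₁,…,λ_{k−1}), every nonzero (λ,λ_k) ∈ Λ* satisfies H(λ)·|λ_k| ≥ c, so the dual multiplicative lower bound H(λ)·|λ_k| > 1/φ(H(λ)) holds with the constant function φ ≡ 2/c. (Such a lattice arises, after rescaling, from the Minkowski embedding of the ring of integers of a totally real number field of degree k, on which the field norm is a nonzero integer.) -/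
open scoped BigOperators

/-- The Fourier transform `∫ w(x) e^{-2πiξx} dx` of a real weight function. -/
noncomputable def fhat (w : ℝ → ℝ) (ξ : ℝ) : ℂ :=
  ∫ x : ℝ, (w x : ℂ) * Complex.exp (-(2 * Real.pi * Complex.I * ξ * x))

/-- The class 𝒢_{k,ℓ} of good weight tuples. -/
def GoodWeights (k ℓ : ℕ) (w : Fin k → ℝ → ℝ) : Prop :=
  ∀ i : Fin k,
    (∀ x, 0 ≤ w i x) ∧
    (Function.support (w i) ⊆ Set.Icc (-2 : ℝ) 2) ∧
    ContDiff ℝ ℓ (w i) ∧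
    (∀ ξ : ℝ, (fhat (w i) ξ).im = 0 ∧ 0 ≤ (fhat (w i) ξ).re) ∧
    0 < (fhat (w i) 0).re

/-- Multiplicative height `H(m) = ∏ max(1,|mᵢ|)`. -/
noncomputable def Hmul {d : ℕ} (m : Fin d → ℝ) : ℝ := ∏ i, max 1 |m i|

/-- Distance from `x` to the nearest integer. -/
noncomputable def distInt (x : ℝ) : ℝ := |x - (round x : ℝ)|

/-- The constant 𝔠(ω) = ω̂₁(0)⋯ω̂_k(0). -/
noncomputable def smoothC {k : ℕ} (w : Fin k → ℝ → ℝ) : ℝ := ∏ i, (fhat (w i) 0).re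

/-- Smooth discrepancy of the Kronecker sequence of α in the box (γ; ρ) at scale N. -/
noncomputable def Dbox (d : ℕ) (w : Fin (d+1) → ℝ → ℝ) (α γ ρ : Fin d → ℝ) (N : ℝ) : ℝ :=
  (∑' p : (Fin d → ℤ) × ℤ,
      w (Fin.last d) ((p.2 : ℝ) / N) *
        ∏ i : Fin d, w i.castSucc (((p.1 i : ℝ) + (p.2 : ℝ) * α i - γ i) / ρ i))
    - smoothC w * ((∏ i, ρ i) * N)

/-- The point of the lattice `A ℤ^k` indexed by the integer vector `a`. -/
noncomputable def latPt {k : ℕ} (A : Matrix (Fin k) (Fin k) ℝ) (a : Fin k → ℤ) : Fin k → ℝ :=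
  A.mulVec (fun i => (a i : ℝ))

/-- The point of the dual lattice `(A⁻¹)ᵀ ℤ^k` indexed by the integer vector `a`. -/
noncomputable def dualPt {k : ℕ} (A : Matrix (Fin k) (Fin k) ℝ) (a : Fin k → ℤ) : Fin k → ℝ :=
  (A⁻¹).transpose.mulVec (fun i => (a i : ℝ))

/-- Smooth lattice discrepancy of the lattice `A ℤ^{d+1}` in the box (γ; ρ) at scale N. -/
noncomputable def DboxLat (d : ℕ) (A : Matrix (Fin (d+1)) (Fin (d+1)) ℝ)
    (w : Fin (d+1) → ℝ → ℝ) (γ ρ : Fin d → ℝ) (N : ℝ) : ℝ :=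
  (∑' a : Fin (d+1) → ℤ,
      w (Fin.last d) (latPt A a (Fin.last d) / N) *
        ∏ i : Fin d, w i.castSucc ((latPt A a i.castSucc - γ i) / ρ i))
    - smoothC w * ((∏ i, ρ i) * N)

/-- Side-length vector of a test box: each ρᵢ ∈ (0, 1/2). -/
def IsBox {d : ℕ} (ρ : Fin d → ℝ) : Prop := ∀ i, 0 < ρ i ∧ ρ i < 1/2

/-- Every nonzero dual lattice point (λ, λ_k) satisfies H(λ)·|λ_k| > 1/φ(H(λ)). -/
def DualBad (d : ℕ) (A : Matrix (Fin (d+1)) (Fin (d+1)) ℝ) (φ : ℝ → ℝ) : Prop :=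
  ∀ a : Fin (d+1) → ℤ, dualPt A a ≠ 0 →
    Hmul (fun i : Fin d => dualPt A a i.castSucc) * |dualPt A a (Fin.last d)| >
      1 / φ (Hmul (fun i : Fin d => dualPt A a i.castSucc))

/-!
At `x = 8j - 4` the product `∏_{i<k} (x - 8i)` has sign `(-1)^(k-j)` and absolute value at
least `4^k`, so `f = ∏_{i<k} (X - 8i) - 2` has a root `rⱼ` in each interval `(8j - 4, 8j + 4)`,
`j < k`: all its roots are real and distinct. By Eisenstein at `2`, `f` is irreducible over `ℚ`.
For an integer vector `a ≠ 0` put `h = ∑ aⱼ Xʲ`; then `∏ᵢ h(rᵢ)` is the resultant of `f` and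
`h`, an integer, and it is nonzero because `f` is irreducible of degree larger than `deg h`.
So the Vandermonde lattice `V ℤ^k`, `V = (rᵢʲ)`, has all coordinate products of absolute value
at least `1`. Rescaling one row gives `M` with `det M = 1`, and `M ℤ^k` is the dual of the
unimodular lattice `(Mᵀ)⁻¹ ℤ^k`.
-/

open Polynomial Finset Matrix

lemma exists_mem_Ioo_eq_zero_of_mul_neg {f : ℝ → ℝ} (hf : Continuous f) {a b : ℝ} (hab : a ≤ b)
    (h : f a * f b < 0) : ∃ x ∈ Set.Ioo a b, f x = 0 := by
  rcases mul_neg_iff.mp h with ⟨ha, hb⟩ | ⟨ha, hb⟩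
  · exact intermediate_value_Ioo' hab hf.continuousOn ⟨hb, ha⟩
  · exact intermediate_value_Ioo hab hf.continuousOn ⟨ha, hb⟩

lemma prod_aeval_eq_resultant {K : Type*} [CommRing K] [IsDomain K] {p : ℤ[X]} (hp : p.Monic)
    {k : ℕ} (hdeg : p.natDegree = k) {r : Fin k → K} (hr : Function.Injective r)
    (hroot : ∀ i, aeval (r i) p = 0) (h : ℤ[X]) : ∏ i, aeval (r i) h = resultant p h := by
  set pK := p.map (algebraMap ℤ K)
  have hpK : pK.natDegree = k := (hp.natDegree_map _).trans hdeg
  have hroots : pK.roots = (univ.map ⟨r, hr⟩).val := by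
    refine roots_eq_of_natDegree_le_card_of_ne_zero (fun x hx => ?_) (by simp [hpK])
      (hp.map _).ne_zero
    obtain ⟨i, -, rfl⟩ := mem_map.mp hx
    exact (eval_map_algebraMap p (r i)).trans (hroot i)
  have hsplit : pK.Splits := by
    rw [splits_iff_card_roots, hroots, hpK]; simp
  rw [← eq_intCast (algebraMap ℤ K), ← resultant_map_map, ← hp.natDegree_map (algebraMap ℤ K),
    resultant_eq_prod_eval _ _ _ natDegree_map_le hsplit, (hp.map _).leadingCoeff, one_pow,
    one_mul, hroots, map_val, Multiset.map_map]
  exact prod_congr rfl fun i _ => (eval_map_algebraMap h (r i)).symm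

lemma resultant_ne_zero_of_irreducible {p h : ℤ[X]} (hp : Irreducible (p.map (Int.castRingHom ℚ)))
    (h0 : h ≠ 0) (hdeg : h.natDegree < p.natDegree) : resultant p h ≠ 0 := by
  have hinj : Function.Injective (Int.castRingHom ℚ) := RingHom.injective_int _
  have hcop : IsCoprime (p.map (Int.castRingHom ℚ)) (h.map (Int.castRingHom ℚ)) := by
    refine (hp.coprime_iff_not_dvd).mpr fun hdvd => hdeg.not_ge ?_
    simpa [natDegree_map_eq_of_injective hinj] using
      natDegree_le_of_dvd hdvd ((Polynomial.map_ne_zero_iff hinj).mpr h0)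
  have := resultant_ne_zero _ _ hcop
  rwa [natDegree_map_eq_of_injective hinj, natDegree_map_eq_of_injective hinj,
    resultant_map_map, map_ne_zero_iff _ hinj] at this

lemma coeff_sum_C_mul_X_pow {R : Type*} [CommRing R] {k : ℕ} (a : Fin k → R) (j : Fin k) :
    (∑ i : Fin k, C (a i) * X ^ (i : ℕ)).coeff j = a j := by
  simp [finsetSum_coeff, Fin.val_inj]

noncomputable def totallyRealPoly (k : ℕ) : ℤ[X] := ∏ i ∈ range k, (X - C (8 * (i : ℤ))) - C 2

lemma natDegree_totallyRealPoly (k : ℕ) : (totallyRealPoly k).natDegree = k := by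
  rw [totallyRealPoly, natDegree_sub_C, natDegree_prod_of_monic _ _ fun _ _ => monic_X_sub_C _]
  simp only [natDegree_X_sub_C, sum_const, card_range, smul_eq_mul, mul_one]

lemma monic_totallyRealPoly {k : ℕ} (hk : 0 < k) : (totallyRealPoly k).Monic := by
  refine (monic_prod_of_monic _ _ fun _ _ => monic_X_sub_C _).sub_of_left ?_
  rw [degree_prod_of_monic _ _ fun _ _ => monic_X_sub_C _]
  simp only [degree_X_sub_C, sum_const, card_range, nsmul_one]
  exact degree_C_le.trans_lt (by exact_mod_cast hk)

lemma map_totallyRealPoly_zmod_two (k : ℕ) :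
    (totallyRealPoly k).map (Int.castRingHom (ZMod 2)) = X ^ k := by
  have h8 : ∀ i : ℕ, Int.castRingHom (ZMod 2) (8 * i) = 0 := fun i =>
    (ZMod.intCast_zmod_eq_zero_iff_dvd _ 2).mpr ⟨4 * i, by ring⟩
  have h2 : Int.castRingHom (ZMod 2) 2 = 0 := rfl
  simp only [totallyRealPoly, Polynomial.map_sub, Polynomial.map_prod, map_X, map_C, h8, h2,
    map_zero, sub_zero, prod_const, card_range]

lemma coeff_zero_totallyRealPoly {k : ℕ} (hk : 0 < k) : (totallyRealPoly k).coeff 0 = -2 := by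
  rw [totallyRealPoly, coeff_sub, coeff_C_zero, coeff_zero_eq_eval_zero, eval_prod,
    prod_eq_zero (mem_range.mpr hk) (by simp)]
  ring

lemma isEisensteinAt_totallyRealPoly {k : ℕ} (hk : 0 < k) :
    (totallyRealPoly k).IsEisensteinAt (Ideal.span {2}) where
  leading := by
    rw [(monic_totallyRealPoly hk).leadingCoeff, Ideal.mem_span_singleton]
    norm_num
  mem {n} hn := by
    rw [natDegree_totallyRealPoly] at hn
    have := congrArg (coeff · n) (map_totallyRealPoly_zmod_two k)
    simp only [coeff_map, coeff_X_pow, if_neg hn.ne] at this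
    exact Ideal.mem_span_singleton.mpr ((ZMod.intCast_zmod_eq_zero_iff_dvd _ 2).mp this)
  notMem := by
    rw [coeff_zero_totallyRealPoly hk, Ideal.span_singleton_pow, Ideal.mem_span_singleton]
    norm_num

lemma irreducible_map_totallyRealPoly {k : ℕ} (hk : 0 < k) :
    Irreducible ((totallyRealPoly k).map (Int.castRingHom ℚ)) :=
  (IsPrimitive.Int.irreducible_iff_irreducible_map_cast (monic_totallyRealPoly hk).isPrimitive).mp
    ((isEisensteinAt_totallyRealPoly hk).irreducible
      (Ideal.span_singleton_prime two_ne_zero |>.mpr Int.prime_two)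
      (monic_totallyRealPoly hk).isPrimitive (by rwa [natDegree_totallyRealPoly]))

lemma aeval_totallyRealPoly (k : ℕ) (x : ℝ) :
    aeval x (totallyRealPoly k) = ∏ i ∈ range k, (x - 8 * i) - 2 := by
  simp only [totallyRealPoly, map_sub, map_prod, aeval_X, map_mul, map_natCast,
    map_ofNat]

lemma neg_one_pow_mul_prod_sub_eq_prod_abs {k j : ℕ} (hj : j ≤ k) :
    (-1) ^ (k - j) * ∏ i ∈ range k, ((8 * j - 4 : ℝ) - 8 * i) =
      ∏ i ∈ range k, |(8 * j - 4 : ℝ) - 8 * i| := by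
  rw [← prod_range_mul_prod_Ico _ hj, ← prod_range_mul_prod_Ico _ hj, mul_left_comm,
    ← Nat.card_Ico j k, ← prod_neg]
  congr 1
  · refine prod_congr rfl fun i hi => (abs_of_pos ?_).symm
    have : (i : ℝ) + 1 ≤ j := by exact_mod_cast mem_range.mp hi
    linarith
  · refine prod_congr rfl fun i hi => (abs_of_neg ?_).symm
    have : (j : ℝ) ≤ i := by exact_mod_cast (mem_Ico.mp hi).1
    linarith

lemma four_pow_le_prod_abs (k j : ℕ) : (4 : ℝ) ^ k ≤ ∏ i ∈ range k, |(8 * j - 4 : ℝ) - 8 * i| := by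
  rw [show (4 : ℝ) ^ k = ∏ _i ∈ range k, 4 by simp]
  refine prod_le_prod (fun _ _ => by norm_num) fun i _ => ?_
  rcases le_or_gt j i with h | h
  · have : (j : ℝ) ≤ i := by exact_mod_cast h
    rw [abs_of_neg (by linarith)]; linarith
  · have : (i : ℝ) + 1 ≤ j := by exact_mod_cast h
    rw [abs_of_pos (by linarith)]; linarith

lemma neg_one_pow_mul_aeval_totallyRealPoly_pos {k j : ℕ} (hk : 0 < k) (hj : j ≤ k) :
    0 < (-1) ^ (k - j) * aeval (8 * j - 4 : ℝ) (totallyRealPoly k) := by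
  have h4 : (4 : ℝ) ≤ 4 ^ k := le_self_pow₀ (by norm_num) hk.ne'
  have hsign : (-1 : ℝ) ^ (k - j) * 2 ≤ 2 := by
    rcases neg_one_pow_eq_or ℝ (k - j) with h | h <;> rw [h] <;> norm_num
  rw [aeval_totallyRealPoly, mul_sub, neg_one_pow_mul_prod_sub_eq_prod_abs hj]
  linarith [four_pow_le_prod_abs k j]

lemma exists_root_totallyRealPoly_mem_Ioo {k j : ℕ} (hj : j < k) :
    ∃ x ∈ Set.Ioo (8 * j - 4 : ℝ) (8 * j + 4), aeval x (totallyRealPoly k) = 0 := by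
  have hleft := neg_one_pow_mul_aeval_totallyRealPoly_pos (j.zero_le.trans_lt hj) hj.le
  have hright := neg_one_pow_mul_aeval_totallyRealPoly_pos (j.zero_le.trans_lt hj) hj
  rw [show k - j = k - (j + 1) + 1 by omega, pow_succ] at hleft
  rw [Nat.cast_succ, show (8 * (j + 1) - 4 : ℝ) = 8 * j + 4 by ring] at hright
  refine exists_mem_Ioo_eq_zero_of_mul_neg (Polynomial.continuous_aeval _) (by linarith) ?_
  rcases neg_one_pow_eq_or ℝ (k - (j + 1)) with h | h <;> rw [h] at hleft hright <;> nlinarith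

lemma exists_injective_roots_totallyRealPoly (k : ℕ) :
    ∃ r : Fin k → ℝ, Function.Injective r ∧ ∀ i, aeval (r i) (totallyRealPoly k) = 0 := by
  choose r hr hroot using fun i : Fin k => exists_root_totallyRealPoly_mem_Ioo i.isLt
  refine ⟨r, fun i j hij => Fin.ext ?_, hroot⟩
  have hi := hr i
  rw [hij] at hi
  have hij : (i : ℕ) < j + 1 := by exact_mod_cast (by linarith [hi.1, (hr j).2] : (i : ℝ) < j + 1)
  have hji : (j : ℕ) < i + 1 := by exact_mod_cast (by linarith [hi.2, (hr j).1] : (j : ℝ) < i + 1)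
  omega

lemma vandermonde_mulVec_intCast {K : Type*} [CommRing K] {k : ℕ} (r : Fin k → K)
    (a : Fin k → ℤ) (i : Fin k) :
    (vandermonde r *ᵥ fun j => (a j : K)) i = aeval (r i) (∑ j : Fin k, C (a j) * X ^ (j : ℕ)) := by
  simp [Matrix.mulVec, dotProduct, mul_comm]

lemma exists_det_ne_zero_one_le_abs_prod_mulVec (k : ℕ) :
    ∃ V : Matrix (Fin k) (Fin k) ℝ, V.det ≠ 0 ∧
      ∀ a : Fin k → ℤ, a ≠ 0 → 1 ≤ |∏ i, (V *ᵥ fun j => (a j : ℝ)) i| := by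
  obtain ⟨r, hr, hroot⟩ := exists_injective_roots_totallyRealPoly k
  refine ⟨vandermonde r, det_vandermonde_ne_zero_iff.mpr hr, fun a ha => ?_⟩
  obtain ⟨j, hj⟩ := Function.ne_iff.mp ha
  have hk : 0 < k := j.pos
  set h : ℤ[X] := ∑ j : Fin k, C (a j) * X ^ (j : ℕ)
  have hcoeff : ∀ j : Fin k, h.coeff j = a j := coeff_sum_C_mul_X_pow a
  have h0 : h ≠ 0 := fun h0 => hj (by rw [← hcoeff j, h0, coeff_zero]; rfl)
  have hdeg : h.natDegree < (totallyRealPoly k).natDegree := by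
    rw [natDegree_totallyRealPoly]
    exact (natDegree_lt_iff_degree_lt h0).mpr (degree_sum_fin_lt _)
  have hres := resultant_ne_zero_of_irreducible (irreducible_map_totallyRealPoly hk) h0 hdeg
  simp only [vandermonde_mulVec_intCast]
  rw [prod_aeval_eq_resultant (monic_totallyRealPoly hk) (natDegree_totallyRealPoly k) hr hroot]
  exact_mod_cast Int.one_le_abs hres

lemma exists_det_eq_one_prod_mulVec {K ι : Type*} [Field K] [Fintype ι] [DecidableEq ι] (i₀ : ι)
    {V : Matrix ι ι K} (hV : V.det ≠ 0) :
    ∃ M : Matrix ι ι K, M.det = 1 ∧ ∀ x, ∏ i, (M *ᵥ x) i = V.det⁻¹ * ∏ i, (V *ᵥ x) i := by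
  set s : ι → K := Function.update 1 i₀ V.det⁻¹
  have hs : ∏ i, s i = V.det⁻¹ := by simp [s, prod_update_of_mem (mem_univ i₀)]
  refine ⟨Matrix.diagonal s * V, ?_, fun x => ?_⟩
  · rw [Matrix.det_mul, Matrix.det_diagonal, hs, inv_mul_cancel₀ hV]
  · simp only [← Matrix.mulVec_mulVec, Matrix.mulVec_diagonal, prod_mul_distrib, hs]

lemma dualPt_inv_transpose {k : ℕ} {M : Matrix (Fin k) (Fin k) ℝ} (hM : IsUnit M.det)
    (a : Fin k → ℤ) : dualPt (Mᵀ)⁻¹ a = M *ᵥ fun i => (a i : ℝ) := by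
  rw [dualPt, nonsing_inv_nonsing_inv _ (by rwa [det_transpose]), transpose_transpose]

lemma abs_prod_le_Hmul_mul_abs_last {d : ℕ} (x : Fin (d + 1) → ℝ) :
    |∏ i, x i| ≤ Hmul (fun i : Fin d => x i.castSucc) * |x (Fin.last d)| := by
  rw [abs_prod, Fin.prod_univ_castSucc, Hmul]
  gcongr
  exact le_max_right _ _

theorem exists_unimodular_lattice_dual_product_bounded_general (d : ℕ) :
    ∃ A : Matrix (Fin (d+1)) (Fin (d+1)) ℝ, |A.det| = 1 ∧
      ∃ c : ℝ, 0 < c ∧ c ≤ 1 ∧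
        ∀ a : Fin (d+1) → ℤ, dualPt A a ≠ 0 →
          c ≤ |∏ i, dualPt A a i| ∧
          c ≤ Hmul (fun i : Fin d => dualPt A a i.castSucc) *
                |dualPt A a (Fin.last d)| ∧
          Hmul (fun i : Fin d => dualPt A a i.castSucc) * |dualPt A a (Fin.last d)| >
            1 / (2 / c) := by
  obtain ⟨V, hV, hVprod⟩ := exists_det_ne_zero_one_le_abs_prod_mulVec (d + 1)
  obtain ⟨M, hM, hMprod⟩ := exists_det_eq_one_prod_mulVec (Fin.last d) hV
  have hMunit : IsUnit M.det := hM ▸ isUnit_one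
  set c := min 1 |V.det|⁻¹
  have hc : 0 < c := lt_min one_pos (by positivity)
  refine ⟨(Mᵀ)⁻¹, by rw [det_nonsing_inv, det_transpose, hM]; norm_num, c, hc, min_le_left _ _,
    fun a ha => ?_⟩
  rw [dualPt_inv_transpose hMunit] at ha ⊢
  have ha₀ : a ≠ 0 := by rintro rfl; simp [← Pi.zero_def] at ha
  have hprod : c ≤ |∏ i, (M *ᵥ fun i => (a i : ℝ)) i| :=
    calc c ≤ |V.det|⁻¹ := min_le_right _ _
      _ ≤ |V.det|⁻¹ * |∏ i, (V *ᵥ fun i => (a i : ℝ)) i| :=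
        le_mul_of_one_le_right (by positivity) (hVprod a ha₀)
      _ = _ := by rw [hMprod, abs_mul, abs_inv]
  have hH := hprod.trans (abs_prod_le_Hmul_mul_abs_last _)
  exact ⟨hprod, hH, by rw [one_div_div]; linarith [half_lt_self hc]⟩

/-- Existence of a unimodular lattice whose dual has all products of
coordinates bounded away from zero; in particular the dual multiplicative lower bound
holds with a constant function φ ≡ 2/c. -/
theorem exists_unimodular_lattice_dual_product_bounded (d : ℕ) (hd : 1 ≤ d) :
    ∃ A : Matrix (Fin (d+1)) (Fin (d+1)) ℝ, |A.det| = 1 ∧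
      ∃ c : ℝ, 0 < c ∧ c ≤ 1 ∧
        ∀ a : Fin (d+1) → ℤ, dualPt A a ≠ 0 →
          c ≤ |∏ i, dualPt A a i| ∧
          c ≤ Hmul (fun i : Fin d => dualPt A a i.castSucc) *
                |dualPt A a (Fin.last d)| ∧
          Hmul (fun i : Fin d => dualPt A a i.castSucc) * |dualPt A a (Fin.last d)| >
            1 / (2 / c) :=
  exists_unimodular_lattice_dual_product_bounded_general d
end

section
/- Let d ≥ 1 and k = d+1. Let φ : [1,∞) → [1,∞) be non-decreasing, let L : [φ(1),∞) → [1,∞) satisfy L(x)·φ(L(x)) = x for all x ≥ φ(1), and let Λ = Aℤ^k be a unimodular lattice in ℝ^k such that every nonzero (λ,λ_k) ∈ Λ* = (A^{−1})ᵀℤ^k (with λ ∈ ℝ^d) satisfies H(λ)·|λ_k| > 1/φ(H(λ)). Let ρ ∈ (0,1/2)^d and let N ≥ φ(1) be a real number with ρ₁⋯ρ_d·N > φ(L(N)). Then there is no point (λ,λ_k) ∈ Λ* with λ ≠ 0, |λᵢ| ≤ ρᵢ^{−1} for all i ≤ d, and |λ_k| ≤ N^{−1}. -/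
open scoped BigOperators

/-! The box condition bounds the height of `λ` by `(ρ₁⋯ρ_d)⁻¹`, and the volume condition puts
this bound below `L(N)`. Since `x ↦ x φ(x)` is increasing and equals `N` at `L(N)`, we get
`H(λ) φ(H(λ)) < N`; but the Diophantine condition on `Λ*` gives `|λ_k| > 1 / (H(λ) φ(H(λ)))`,
which contradicts `|λ_k| ≤ N⁻¹`. -/

lemma one_le_Hmul {d : ℕ} (m : Fin d → ℝ) : 1 ≤ Hmul m :=
  Finset.one_le_prod fun _ _ => le_max_left _ _

lemma Hmul_le_prod_inv {d : ℕ} {m ρ : Fin d → ℝ} (hρ : ∀ i, 0 < ρ i ∧ ρ i ≤ 1)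
    (hm : ∀ i, |m i| ≤ (ρ i)⁻¹) : Hmul m ≤ (∏ i, ρ i)⁻¹ := by
  rw [Hmul, ← Finset.prod_inv_distrib]
  refine Finset.prod_le_prod (fun _ _ => zero_le_one.trans (le_max_left _ _)) fun i _ => ?_
  exact max_le (one_le_inv₀ (hρ i).1 |>.mpr (hρ i).2) (hm i)

lemma IsBox.pos_le_one {d : ℕ} {ρ : Fin d → ℝ} (hρ : IsBox ρ) (i : Fin d) :
    0 < ρ i ∧ ρ i ≤ 1 :=
  ⟨(hρ i).1, by linarith [(hρ i).2]⟩

/-- Strict monotonicity of `x ↦ x φ(x)` on `[1, ∞)`, in the form needed to compare with a point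
`y` that is only known through the value `φ y`. -/
lemma mul_apply_lt_of_mul_lt {φ : ℝ → ℝ} (hφ : MonotoneOn φ (Set.Ici 1)) {x y : ℝ}
    (hx : 1 ≤ x) (hy : 1 ≤ y) (hφy : 0 < φ y) (h : x * φ y < y * φ y) :
    x * φ x < y * φ y := by
  have hxy : x < y := lt_of_mul_lt_mul_right h hφy.le
  calc x * φ x ≤ x * φ y := by gcongr; exact hφ hx hy hxy.le
    _ < y * φ y := h

lemma DualBad.lt_Hmul_mul {d : ℕ} {A : Matrix (Fin (d+1)) (Fin (d+1)) ℝ} {φ : ℝ → ℝ}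
    (hbad : DualBad d A φ) (hφ : ∀ x, 1 ≤ x → 1 ≤ φ x) {a : Fin (d+1) → ℤ}
    (hne : (fun i : Fin d => dualPt A a i.castSucc) ≠ 0) {N : ℝ} (hN : 0 < N)
    (hlast : |dualPt A a (Fin.last d)| ≤ N⁻¹) :
    N < Hmul (fun i : Fin d => dualPt A a i.castSucc) *
      φ (Hmul (fun i : Fin d => dualPt A a i.castSucc)) := by
  set H := Hmul (fun i : Fin d => dualPt A a i.castSucc)
  have hφH : 0 < φ H := one_pos.trans_le (hφ H (one_le_Hmul _))
  have hbadH : 1 / φ H < H * |dualPt A a (Fin.last d)| :=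
    hbad a fun h => hne (funext fun i => by simp [h])
  have hlastN : N * |dualPt A a (Fin.last d)| ≤ 1 := by
    simpa [hN.ne'] using mul_le_mul_of_nonneg_left hlast hN.le
  rw [div_lt_iff₀ hφH] at hbadH
  by_contra! hle
  have := mul_le_mul_of_nonneg_right hle (abs_nonneg (dualPt A a (Fin.last d)))
  linarith

theorem uncertainty_regime_empty_general
    (d : ℕ) (φ L : ℝ → ℝ)
    (hφmap : ∀ x, 1 ≤ x → 1 ≤ φ x)
    (hφmono : ∀ x y, 1 ≤ x → x ≤ y → φ x ≤ φ y)
    (hLmap : ∀ x, φ 1 ≤ x → 1 ≤ L x)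
    (hLdef : ∀ x, φ 1 ≤ x → L x * φ (L x) = x)
    (A : Matrix (Fin (d+1)) (Fin (d+1)) ℝ)
    (hbad : DualBad d A φ)
    (ρ : Fin d → ℝ) (hρ : IsBox ρ) (N : ℝ) (hN : φ 1 ≤ N)
    (hvol : φ (L N) < (∏ i, ρ i) * N) :
    ¬ ∃ a : Fin (d+1) → ℤ,
        (fun i : Fin d => dualPt A a i.castSucc) ≠ 0 ∧
        (∀ i : Fin d, |dualPt A a i.castSucc| ≤ (ρ i)⁻¹) ∧
        |dualPt A a (Fin.last d)| ≤ N⁻¹ := by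
  rintro ⟨a, hne, hbox, hlast⟩
  set H := Hmul (fun i : Fin d => dualPt A a i.castSucc)
  have hNpos : 0 < N := one_pos.trans_le ((hφmap 1 le_rfl).trans hN)
  have hLN : 1 ≤ L N := hLmap N hN
  have hφLN : 0 < φ (L N) := one_pos.trans_le (hφmap _ hLN)
  have hρpos : 0 < ∏ i, ρ i := Finset.prod_pos fun i _ => (hρ i).1
  have hHρ : H ≤ (∏ i, ρ i)⁻¹ := Hmul_le_prod_inv hρ.pos_le_one hbox
  have hHL : H * φ (L N) < L N * φ (L N) := by
    rw [hLdef N hN]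
    calc H * φ (L N) ≤ (∏ i, ρ i)⁻¹ * φ (L N) := by gcongr
      _ < N := by rwa [inv_mul_lt_iff₀ hρpos]
  have hHN : H * φ H < N := hLdef N hN ▸
    mul_apply_lt_of_mul_lt (fun x hx y _ hxy => hφmono x y hx hxy) (one_le_Hmul _) hLN hφLN hHL
  exact (hbad.lt_Hmul_mul hφmap hne hNpos hlast).not_gt hHN

/-- The uncertainty regime 𝒰 is empty for boxes of large volume. -/
theorem uncertainty_regime_empty
    (d : ℕ) (hd : 1 ≤ d) (φ L : ℝ → ℝ)
    (hφmap : ∀ x, 1 ≤ x → 1 ≤ φ x)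
    (hφmono : ∀ x y, 1 ≤ x → x ≤ y → φ x ≤ φ y)
    (hLmap : ∀ x, φ 1 ≤ x → 1 ≤ L x)
    (hLdef : ∀ x, φ 1 ≤ x → L x * φ (L x) = x)
    (A : Matrix (Fin (d+1)) (Fin (d+1)) ℝ) (hdet : |A.det| = 1)
    (hbad : DualBad d A φ)
    (ρ : Fin d → ℝ) (hρ : IsBox ρ) (N : ℝ) (hN : φ 1 ≤ N)
    (hvol : φ (L N) < (∏ i, ρ i) * N) :
    ¬ ∃ a : Fin (d+1) → ℤ,
        (fun i : Fin d => dualPt A a i.castSucc) ≠ 0 ∧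
        (∀ i : Fin d, |dualPt A a i.castSucc| ≤ (ρ i)⁻¹) ∧
        |dualPt A a (Fin.last d)| ≤ N⁻¹ :=
  uncertainty_regime_empty_general d φ L hφmap hφmono hLmap hLdef A hbad ρ hρ N hN hvol
end

section
/- Let d ≥ 1 and k = d+1. Let φ : [1,∞) → [1,∞) be non-decreasing and let Λ = Aℤ^k be a unimodular lattice in ℝ^k such that every nonzero (λ,λ_k) ∈ Λ* = (A^{−1})ᵀℤ^k (with λ ∈ ℝ^d) satisfies H(λ)·|λ_k| > 1/φ(H(λ)). Let M ∈ (0,∞)^d, and suppose (λ,λ_k) and (λ',λ'_k) are distinct points of Λ* with |λᵢ| ≤ Mᵢ and |λ'ᵢ| ≤ Mᵢ for all i ≤ d. Then |λ_k − λ'_k| > 1/(2^d·H(M)·φ(2^d·H(M))). In particular, the projection (λ,λ_k) ↦ λ_k is injective on such sets of dual lattice points. -/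
open scoped BigOperators

/-- Gap principle: spacing of last coordinates of dual lattice points
whose first d coordinates lie in a box. -/
theorem dual_lattice_gap_principle
    (d : ℕ) (hd : 1 ≤ d) (φ : ℝ → ℝ)
    (hφmap : ∀ x, 1 ≤ x → 1 ≤ φ x)
    (hφmono : ∀ x y, 1 ≤ x → x ≤ y → φ x ≤ φ y)
    (A : Matrix (Fin (d+1)) (Fin (d+1)) ℝ) (hdet : |A.det| = 1)
    (hbad : DualBad d A φ)
    (M : Fin d → ℝ) (hM : ∀ i, 0 < M i)
    (a b : Fin (d+1) → ℤ) (hne : dualPt A a ≠ dualPt A b)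
    (ha : ∀ i : Fin d, |dualPt A a i.castSucc| ≤ M i)
    (hb : ∀ i : Fin d, |dualPt A b i.castSucc| ≤ M i) :
    |dualPt A a (Fin.last d) - dualPt A b (Fin.last d)| >
      1 / (2 ^ d * Hmul M * φ (2 ^ d * Hmul M)) := by
  have hce : dualPt A (a - b) = dualPt A a - dualPt A b := by
    unfold dualPt
    have hv : (fun i => (((a - b) i : ℤ) : ℝ)) =
        (fun i => ((a i : ℤ) : ℝ)) - (fun i => ((b i : ℤ) : ℝ)) := by
      funext i; simp only [Pi.sub_apply]; push_cast; ring
    rw [hv, Matrix.mulVec_sub]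
  have hc0 : dualPt A (a - b) ≠ 0 := by
    rw [hce]; intro h; exact hne (sub_eq_zero.mp h)
  set L : Fin d → ℝ := fun i => dualPt A (a - b) i.castSucc with hL
  have hone : ∀ (m : Fin d → ℝ), (1:ℝ) ≤ Hmul m := by
    intro m
    unfold Hmul
    have h1 : (1:ℝ) = ∏ _i : Fin d, (1:ℝ) := by simp
    rw [h1]
    exact Finset.prod_le_prod (by intros; norm_num)
      (fun i _ => by simpa using le_max_left (1:ℝ) |m i|)
  have hHL1 : (1:ℝ) ≤ Hmul L := hone L
  have hHM1 : (1:ℝ) ≤ Hmul M := hone M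
  have hLB : ∀ i, max 1 |L i| ≤ 2 * max 1 |M i| := by
    intro i
    have h1 : |L i| ≤ 2 * M i := by
      have : L i = dualPt A a i.castSucc - dualPt A b i.castSucc := by
        rw [hL]; simp [hce]
      rw [this]
      calc |dualPt A a i.castSucc - dualPt A b i.castSucc|
          ≤ |dualPt A a i.castSucc| + |dualPt A b i.castSucc| := abs_sub _ _
        _ ≤ M i + M i := add_le_add (ha i) (hb i)
        _ = 2 * M i := by ring
    have hMi : |M i| = M i := abs_of_pos (hM i)
    apply max_le
    · linarith [le_max_left (1:ℝ) |M i|]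
    · linarith [le_max_right (1:ℝ) |M i|]
  have hB : Hmul L ≤ 2 ^ d * Hmul M := by
    unfold Hmul
    calc (∏ i, max 1 |L i|) ≤ ∏ i, 2 * max 1 |M i| := by
          apply Finset.prod_le_prod
          · intro i _; exact le_trans zero_le_one (le_max_left _ _)
          · intro i _; exact hLB i
      _ = 2 ^ d * Hmul M := by
          unfold Hmul
          rw [Finset.prod_mul_distrib, Finset.prod_const, Finset.card_univ,
            Fintype.card_fin]
  set B : ℝ := 2 ^ d * Hmul M with hBdef
  have hB1 : (1:ℝ) ≤ B := le_trans hHL1 hB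
  have hBpos : (0:ℝ) < B := lt_of_lt_of_le one_pos hB1
  have hφB : (1:ℝ) ≤ φ B := hφmap _ hB1
  have hφBpos : (0:ℝ) < φ B := lt_of_lt_of_le one_pos hφB
  have hφLpos : (0:ℝ) < φ (Hmul L) := lt_of_lt_of_le one_pos (hφmap _ hHL1)
  have hbadc := hbad (a - b) hc0
  have hkey : Hmul L * |dualPt A (a - b) (Fin.last d)| > 1 / φ B := by
    have hmono : φ (Hmul L) ≤ φ B := hφmono _ _ hHL1 hB
    have : 1 / φ B ≤ 1 / φ (Hmul L) := one_div_le_one_div_of_le hφLpos hmono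
    exact lt_of_le_of_lt this hbadc
  have habs : |dualPt A a (Fin.last d) - dualPt A b (Fin.last d)|
      = |dualPt A (a - b) (Fin.last d)| := by rw [hce]; simp
  rw [habs]
  have hBk : B * |dualPt A (a - b) (Fin.last d)| > 1 / φ B := by
    have h0 : (0:ℝ) ≤ |dualPt A (a - b) (Fin.last d)| := abs_nonneg _
    nlinarith
  rw [gt_iff_lt, div_lt_iff₀ (by positivity)]
  rw [gt_iff_lt, div_lt_iff₀ hφBpos] at hBk
  nlinarith
end
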